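/- arXiv:1401.1872 — 5 statements merged into one kernel-verified Lean document; each statement's English description precedes it below -/
import Mathlib

section
/- For any integers k, m, N with 1 ≤ k ≤ m ≤ N/2, and the constant c = log₂(e) + 1, we have log₂ C(N−k, m−k) ≤ (1 − k/(c·m)) · log₂ C(N, m), where C(·,·) denotes the binomial coefficient. -/
/-!
Put `r = N / m ≥ 2`. Each of the `k` forced elements costs a factor `(m - i) / (N - i) ≤ 1 / r`,
so `C(N - k, m - k) ≤ r⁻ᵏ C(N, m)`, while `C(N, m) ≤ (e r)ᵐ`. Since `log₂ r ≥ 1`, the second bound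
gives `log₂ C(N, m) ≤ m (log₂ e + log₂ r) ≤ c m log₂ r`, so the loss `k log₂ r` from the first bound
is at least `k / (c m) · log₂ C(N, m)`.
-/

open Real

theorem Nat.pow_mul_choose_sub_le_pow_mul_choose {N m k : ℕ} (hkm : k ≤ m) (hmN : m ≤ N) :
    N ^ k * (N - k).choose (m - k) ≤ m ^ k * N.choose m := by
  induction k with
  | zero => simp
  | succ k ih =>
    have hpascal :
        (N - k) * (N - (k + 1)).choose (m - (k + 1)) = (m - k) * (N - k).choose (m - k) := by
      have h := Nat.add_one_mul_choose_eq (N - (k + 1)) (m - (k + 1))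
      rwa [show N - (k + 1) + 1 = N - k by omega, show m - (k + 1) + 1 = m - k by omega,
        mul_comm _ (m - k)] at h
    have hratio : N * (m - k) ≤ m * (N - k) := by
      zify [hkm.trans' k.le_succ, (hkm.trans' k.le_succ).trans hmN]
      nlinarith
    refine Nat.le_of_mul_le_mul_left ?_ (show 0 < N - k by omega)
    calc (N - k) * (N ^ (k + 1) * (N - (k + 1)).choose (m - (k + 1)))
        = N ^ k * (N * (m - k)) * (N - k).choose (m - k) := by
          rw [← mul_assoc, mul_comm (N - k), mul_assoc, hpascal]; ring
      _ ≤ N ^ k * (m * (N - k)) * (N - k).choose (m - k) := by gcongr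
      _ = m * (N - k) * (N ^ k * (N - k).choose (m - k)) := by ring
      _ ≤ m * (N - k) * (m ^ k * N.choose m) := Nat.mul_le_mul_left _ (ih (by omega))
      _ = (N - k) * (m ^ (k + 1) * N.choose m) := by ring

theorem Nat.choose_le_exp_one_mul_div_pow (N m : ℕ) : (N.choose m : ℝ) ≤ (exp 1 * N / m) ^ m := by
  rcases Nat.eq_zero_or_pos m with rfl | hm
  · simp
  have hmm : (m : ℝ) ^ m / m.factorial ≤ exp 1 ^ m := by
    rw [exp_one_pow]; exact pow_div_factorial_le_exp _ (by positivity) m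
  calc (N.choose m : ℝ) ≤ N ^ m / m.factorial := Nat.choose_le_pow_div m N
    _ = ((m : ℝ) ^ m / m.factorial) * (N / m) ^ m := by
      rw [div_pow]; field_simp
    _ ≤ exp 1 ^ m * (N / m) ^ m := by gcongr
    _ = (exp 1 * N / m) ^ m := by rw [mul_div_assoc, mul_pow]

theorem logb_choose_sub_le {b : ℝ} (hb : 1 < b) {N m k : ℕ} (hm : 0 < m) (hkm : k ≤ m)
    (hmN : m ≤ N) :
    logb b ((N - k).choose (m - k)) ≤ logb b (N.choose m) - k * logb b (N / m) := by
  have hN : (0 : ℝ) < N := by exact_mod_cast hm.trans_le hmN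
  have hchoose : (0 : ℝ) < (N - k).choose (m - k) := by exact_mod_cast Nat.choose_pos (by omega)
  have hprod : (N / m : ℝ) ^ k * (N - k).choose (m - k) ≤ N.choose m := by
    have h : (N : ℝ) ^ k * (N - k).choose (m - k) ≤ m ^ k * N.choose m := by
      exact_mod_cast Nat.pow_mul_choose_sub_le_pow_mul_choose hkm hmN
    rw [div_pow, div_mul_eq_mul_div, div_le_iff₀ (by positivity)]
    linarith
  have h := logb_le_logb_of_le hb (by positivity) hprod
  rw [logb_mul (by positivity) hchoose.ne', logb_pow] at h
  linarith

theorem logb_choose_le {b : ℝ} (hb : 1 < b) {N m : ℕ} (hm : 0 < m) (hmN : m ≤ N) :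
    logb b (N.choose m) ≤ m * (logb b (exp 1) + logb b (N / m)) := by
  have hN : (0 : ℝ) < N := by exact_mod_cast hm.trans_le hmN
  have h := logb_le_logb_of_le hb (by exact_mod_cast Nat.choose_pos hmN)
    (Nat.choose_le_exp_one_mul_div_pow N m)
  rwa [logb_pow, mul_div_assoc, logb_mul (exp_pos 1).ne' (by positivity)] at h

theorem stmt_0_general (N m k : ℕ) (h2 : k ≤ m) (h3 : 2 * m ≤ N) :
    Real.logb 2 ((N - k).choose (m - k)) ≤
      (1 - (k : ℝ) / ((Real.logb 2 (Real.exp 1) + 1) * m)) * Real.logb 2 (N.choose m) := by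
  rcases Nat.eq_zero_or_pos m with rfl | hm
  · obtain rfl : k = 0 := by omega
    simp
  have hmN : m ≤ N := by omega
  set L := logb 2 (exp 1)
  set t := logb 2 (N / m)
  set B := logb 2 (N.choose m)
  have hm' : (0 : ℝ) < m := by exact_mod_cast hm
  have hL : 0 < L := logb_pos one_lt_two (by linarith [add_one_lt_exp one_ne_zero])
  have ht : 1 ≤ t := by
    rw [← logb_self_eq_one one_lt_two]
    exact logb_le_logb_of_le one_lt_two two_pos (by rw [le_div_iff₀ hm']; exact_mod_cast h3)
  have hB : B ≤ (L + 1) * m * t := by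
    calc B ≤ m * (L + t) := logb_choose_le one_lt_two hm hmN
      _ ≤ (L + 1) * m * t := by nlinarith [mul_le_mul_of_nonneg_left ht (mul_pos hm' hL).le]
  calc logb 2 ((N - k).choose (m - k)) ≤ B - k * t := logb_choose_sub_le one_lt_two hm h2 hmN
    _ ≤ B - k / ((L + 1) * m) * B := by
      refine sub_le_sub_left ?_ B
      rw [div_mul_eq_mul_div, div_le_iff₀ (by positivity), mul_assoc, mul_comm t]
      gcongr
    _ = (1 - k / ((L + 1) * m)) * B := by ring

theorem stmt_0 (N m k : ℕ) (h1 : 1 ≤ k) (h2 : k ≤ m) (h3 : 2 * m ≤ N) :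
    Real.logb 2 ((N - k).choose (m - k)) ≤
      (1 - (k : ℝ) / ((Real.logb 2 (Real.exp 1) + 1) * m)) * Real.logb 2 (N.choose m) :=
  stmt_0_general N m k h2 h3
end

section
/- Let m₁, m₂ : Fin n → ℝ≥0 be such that m₁(h)·m₂(h) contributes to a join output count, and let W₁ᵢ(h), W₂ᵢ(h) : Fin p × Fin n → ℝ≥0 with Σᵢ Σ_h W₁ᵢ(h)·W₂ᵢ(h) ≥ Σ_h m₁(h)·m₂(h). If for each server i, Σ_h W₁ᵢ(h) ≤ L and Σ_h W₂ᵢ(h) ≤ L, then Σ_h m₁(h)·m₂(h) ≤ p·L², i.e., L ≥ √(Σ_h m₁(h)·m₂(h) / p). -/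
theorem stmt_5 (p n : ℕ) (hp : 0 < p) (W₁ W₂ : Fin p → Fin n → ℝ)
    (m₁ m₂ : Fin n → ℝ) (L : ℝ)
    (hW₁ : ∀ i h, 0 ≤ W₁ i h) (hW₂ : ∀ i h, 0 ≤ W₂ i h)
    (hm₁ : ∀ h, 0 ≤ m₁ h) (hm₂ : ∀ h, 0 ≤ m₂ h)
    (hcover : ∑ h, m₁ h * m₂ h ≤ ∑ i, ∑ h, W₁ i h * W₂ i h)
    (hL₁ : ∀ i, ∑ h, W₁ i h ≤ L) (hL₂ : ∀ i, ∑ h, W₂ i h ≤ L) :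
    (∑ h, m₁ h * m₂ h ≤ p * L ^ 2) ∧
    Real.sqrt ((∑ h, m₁ h * m₂ h) / p) ≤ L := by
  have i0 : Fin p := ⟨0, hp⟩
  have hL0 : 0 ≤ L := le_trans (Finset.sum_nonneg fun h _ => hW₁ i0 h) (hL₁ i0)
  have key : ∀ i : Fin p, ∑ h, W₁ i h * W₂ i h ≤ L ^ 2 := by
    intro i
    have h1 : ∑ h, W₁ i h * W₂ i h ≤ (∑ h, W₁ i h) * (∑ h, W₂ i h) := by
      calc ∑ h, W₁ i h * W₂ i h
          ≤ ∑ h, W₁ i h * (∑ h', W₂ i h') := by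
            apply Finset.sum_le_sum
            intro h _
            exact mul_le_mul_of_nonneg_left
              (Finset.single_le_sum (fun h' _ => hW₂ i h') (Finset.mem_univ h)) (hW₁ i h)
        _ = (∑ h, W₁ i h) * (∑ h', W₂ i h') := by rw [← Finset.sum_mul]
    calc ∑ h, W₁ i h * W₂ i h ≤ (∑ h, W₁ i h) * (∑ h, W₂ i h) := h1
      _ ≤ L * L := mul_le_mul (hL₁ i) (hL₂ i)
          (Finset.sum_nonneg fun h _ => hW₂ i h) hL0
      _ = L ^ 2 := (sq L).symm
  have main : ∑ h, m₁ h * m₂ h ≤ p * L ^ 2 := by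
    calc ∑ h, m₁ h * m₂ h ≤ ∑ i, ∑ h, W₁ i h * W₂ i h := hcover
      _ ≤ ∑ _i : Fin p, L ^ 2 := Finset.sum_le_sum fun i _ => key i
      _ = p * L ^ 2 := by simp [Finset.sum_const, nsmul_eq_mul]
  refine ⟨main, ?_⟩
  have hple : (∑ h, m₁ h * m₂ h) / p ≤ L ^ 2 := by
    rw [div_le_iff₀ (by exact_mod_cast hp)]
    linarith [main]
  calc Real.sqrt ((∑ h, m₁ h * m₂ h) / p) ≤ Real.sqrt (L ^ 2) := Real.sqrt_le_sqrt hple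
    _ = L := Real.sqrt_sq hL0
end

section
/- For nonnegative reals a : Fin n × Fin n → ℝ≥0, b : Fin n × Fin n → ℝ≥0, c : Fin n × Fin n → ℝ≥0: Σ_{x,y,z} a(x,y)·b(y,z)·c(z,x) ≤ √( (Σ_{x,y} a(x,y)²) · (Σ_{y,z} b(y,z)²) · (Σ_{z,x} c(z,x)²) ). -/
lemma cs_sqrt {ι : Type*} (s : Finset ι) (f g : ι → ℝ) :
    ∑ i ∈ s, f i * g i ≤ Real.sqrt (∑ i ∈ s, f i ^ 2) * Real.sqrt (∑ i ∈ s, g i ^ 2) := by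
  have h := s.sum_mul_sq_le_sq_mul_sq f g
  calc ∑ i ∈ s, f i * g i ≤ |∑ i ∈ s, f i * g i| := le_abs_self _
    _ = Real.sqrt ((∑ i ∈ s, f i * g i) ^ 2) := (Real.sqrt_sq_eq_abs _).symm
    _ ≤ Real.sqrt ((∑ i ∈ s, f i ^ 2) * ∑ i ∈ s, g i ^ 2) := Real.sqrt_le_sqrt h
    _ = _ := Real.sqrt_mul (Finset.sum_nonneg fun i _ => sq_nonneg _) _

theorem stmt_6 (n : ℕ) (a b c : Fin n → Fin n → ℝ)
    (ha : ∀ x y, 0 ≤ a x y) (hb : ∀ x y, 0 ≤ b x y) (hc : ∀ x y, 0 ≤ c x y) :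
    ∑ x, ∑ y, ∑ z, a x y * b y z * c z x ≤
      Real.sqrt ((∑ x, ∑ y, a x y ^ 2) * (∑ y, ∑ z, b y z ^ 2) * (∑ z, ∑ x, c z x ^ 2)) := by
  set B : Fin n → ℝ := fun y => Real.sqrt (∑ z, b y z ^ 2) with hB
  set C : Fin n → ℝ := fun x => Real.sqrt (∑ z, c z x ^ 2) with hC
  have step1 : ∑ x, ∑ y, ∑ z, a x y * b y z * c z x ≤ ∑ x, ∑ y, a x y * (B y * C x) := by
    refine Finset.sum_le_sum fun x _ => Finset.sum_le_sum fun y _ => ?_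
    have : ∑ z, a x y * b y z * c z x = a x y * ∑ z, b y z * c z x := by
      rw [Finset.mul_sum]; congr 1; ext z; ring
    rw [this]
    exact mul_le_mul_of_nonneg_left (cs_sqrt _ _ _) (ha x y)
  refine step1.trans ?_
  have step2 : ∑ x, ∑ y, a x y * (B y * C x) =
      ∑ p : Fin n × Fin n, a p.1 p.2 * (B p.2 * C p.1) := by
    rw [Fintype.sum_prod_type]
  rw [step2]
  have := cs_sqrt Finset.univ (fun p : Fin n × Fin n => a p.1 p.2)
      (fun p : Fin n × Fin n => B p.2 * C p.1)
  refine this.trans ?_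
  rw [← Real.sqrt_mul (by positivity)]
  apply Real.sqrt_le_sqrt
  have hBsq : ∀ y, B y ^ 2 = ∑ z, b y z ^ 2 := fun y =>
    Real.sq_sqrt (Finset.sum_nonneg fun z _ => sq_nonneg _)
  have hCsq : ∀ x, C x ^ 2 = ∑ z, c z x ^ 2 := fun x =>
    Real.sq_sqrt (Finset.sum_nonneg fun z _ => sq_nonneg _)
  have hsq : ∑ p : Fin n × Fin n, (B p.2 * C p.1) ^ 2 = (∑ x, C x ^ 2) * ∑ y, B y ^ 2 := by
    rw [Finset.sum_mul_sum, Fintype.sum_prod_type]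
    exact Finset.sum_congr rfl fun x _ => Finset.sum_congr rfl fun y _ => by rw [mul_pow]; ring
  have hBs : ∑ y, B y ^ 2 = ∑ y, ∑ z, b y z ^ 2 :=
    Finset.sum_congr rfl fun y _ => hBsq y
  have hCs : ∑ x, C x ^ 2 = ∑ z, ∑ x, c z x ^ 2 := by
    rw [show (∑ x, C x ^ 2) = ∑ x, ∑ z, c z x ^ 2 from Finset.sum_congr rfl fun x _ => hCsq x]
    exact Finset.sum_comm
  have haa : ∑ p : Fin n × Fin n, a p.1 p.2 ^ 2 = ∑ x, ∑ y, a x y ^ 2 :=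
    Fintype.sum_prod_type _
  rw [hsq, hBs, hCs, haa]
  ring_nf
  exact le_of_eq (by ring)
end

section
/- For any three finite relations S₁, S₂, S₃ ⊆ [n] × [n], the number of triangles, i.e., |{(x,y,z) : (x,y) ∈ S₁, (y,z) ∈ S₂, (z,x) ∈ S₃}|, is at most √(|S₁|·|S₂|·|S₃|). -/
private lemma pairsum {α β M : Type*} [Fintype α] [Fintype β] [AddCommMonoid M]
    (f : α → β → M) : ∑ q : α × β, f q.1 q.2 = ∑ a, ∑ b, f a b := by
  rw [Fintype.sum_prod_type]

theorem stmt_7 (n : ℕ) (S₁ S₂ S₃ : Finset (Fin n × Fin n)) :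
    ((Finset.univ.filter (fun t : Fin n × Fin n × Fin n =>
        (t.1, t.2.1) ∈ S₁ ∧ (t.2.1, t.2.2) ∈ S₂ ∧ (t.2.2, t.1) ∈ S₃)).card : ℝ) ≤
      Real.sqrt ((S₁.card : ℝ) * S₂.card * S₃.card) := by
  classical
  set A : Fin n → Fin n → ℝ := fun x y => if (x, y) ∈ S₁ then 1 else 0 with hA
  set B : Fin n → Fin n → ℝ := fun y z => if (y, z) ∈ S₂ then 1 else 0 with hB
  set C : Fin n → Fin n → ℝ := fun z x => if (z, x) ∈ S₃ then 1 else 0 with hC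
  have hAsq : ∀ x y, A x y ^ 2 = A x y := by
    intro x y; simp only [hA]; split <;> norm_num
  have hBsq : ∀ y z, B y z ^ 2 = B y z := by
    intro y z; simp only [hB]; split <;> norm_num
  have hCsq : ∀ z x, C z x ^ 2 = C z x := by
    intro z x; simp only [hC]; split <;> norm_num
  have hBnn : ∀ y z, 0 ≤ B y z := by
    intro y z; simp only [hB]; split <;> norm_num
  have hCnn : ∀ z x, 0 ≤ C z x := by
    intro z x; simp only [hC]; split <;> norm_num
  set g : Fin n → Fin n → ℝ := fun x y => ∑ z, B y z * C z x with hg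
  -- indicator double sums give cardinalities
  have cardsum : ∀ S : Finset (Fin n × Fin n),
      ∑ a : Fin n, ∑ b : Fin n, (if (a, b) ∈ S then (1 : ℝ) else 0) = S.card := by
    intro S
    have h0 : ∑ p : Fin n × Fin n, (if p ∈ S then (1 : ℝ) else 0) = S.card := by
      rw [Finset.sum_ite_mem, Finset.univ_inter, Finset.sum_const, nsmul_eq_mul, mul_one]
    exact (pairsum fun a b => if (a, b) ∈ S then (1 : ℝ) else 0).symm.trans h0
  set T : ℝ := ((Finset.univ.filter (fun t : Fin n × Fin n × Fin n =>
        (t.1, t.2.1) ∈ S₁ ∧ (t.2.1, t.2.2) ∈ S₂ ∧ (t.2.2, t.1) ∈ S₃)).card : ℝ) with hTdef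
  have hT0 : T = ∑ t : Fin n × Fin n × Fin n,
      (if ((t.1, t.2.1) ∈ S₁ ∧ (t.2.1, t.2.2) ∈ S₂ ∧ (t.2.2, t.1) ∈ S₃) then (1:ℝ) else 0) := by
    rw [hTdef, Finset.sum_boole]
  have hT : T = ∑ x, ∑ y, A x y * g x y := by
    rw [hT0, pairsum (fun (x : Fin n) (q : Fin n × Fin n) =>
        if ((x, q.1) ∈ S₁ ∧ (q.1, q.2) ∈ S₂ ∧ (q.2, x) ∈ S₃) then (1:ℝ) else 0)]
    refine Finset.sum_congr rfl fun x _ => ?_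
    rw [pairsum (fun (y z : Fin n) =>
      if ((x, y) ∈ S₁ ∧ (y, z) ∈ S₂ ∧ (z, x) ∈ S₃) then (1:ℝ) else 0)]
    refine Finset.sum_congr rfl fun y _ => ?_
    rw [hg, Finset.mul_sum]
    refine Finset.sum_congr rfl fun z _ => ?_
    simp only [hA, hB, hC]
    by_cases h1 : (x, y) ∈ S₁ <;> by_cases h2 : (y, z) ∈ S₂ <;>
      by_cases h3 : (z, x) ∈ S₃ <;> simp [h1, h2, h3]
  have hTnn : 0 ≤ T := by rw [hTdef]; positivity
  set Q : ℝ := ∑ x, ∑ y, g x y ^ 2 with hQ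
  -- Step 1 : Cauchy-Schwarz over pairs (x,y)
  have step1 : T ^ 2 ≤ (S₁.card : ℝ) * Q := by
    have cs := Finset.sum_mul_sq_le_sq_mul_sq Finset.univ
      (fun q : Fin n × Fin n => A q.1 q.2) (fun q : Fin n × Fin n => g q.1 q.2)
    rw [pairsum (fun a b => A a b * g a b), pairsum (fun a b => A a b ^ 2),
      pairsum (fun a b => g a b ^ 2)] at cs
    rw [hT, hQ]
    calc (∑ x, ∑ y, A x y * g x y) ^ 2 ≤ (∑ x, ∑ y, A x y ^ 2) * ∑ x, ∑ y, g x y ^ 2 := cs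
      _ = (S₁.card : ℝ) * ∑ x, ∑ y, g x y ^ 2 := by
          congr 1
          rw [← cardsum S₁]
          exact Finset.sum_congr rfl fun a _ => Finset.sum_congr rfl fun b _ => hAsq a b
  set d : Fin n → ℝ := fun z => ∑ y, B y z with hd
  set e : Fin n → ℝ := fun z => ∑ x, C z x with he
  have hdsum : ∑ z, d z = (S₂.card : ℝ) := by
    rw [← cardsum S₂, Finset.sum_comm]
  have hesum : ∑ z, e z = (S₃.card : ℝ) := by
    rw [← cardsum S₃]
  set P : Fin n → Fin n → ℝ := fun z z' => ∑ y, B y z * B y z' with hP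
  set R : Fin n → Fin n → ℝ := fun z z' => ∑ x, C z x * C z' x with hR
  -- Step 2 : rearrange Q
  have step2 : Q = ∑ z, ∑ z', P z z' * R z z' := by
    rw [hQ]
    have expand : ∀ x y : Fin n, g x y ^ 2 =
        ∑ z, ∑ z', (B y z * C z x) * (B y z' * C z' x) := by
      intro x y
      rw [hg, sq, Finset.sum_mul_sum]
    simp only [expand]
    rw [Finset.sum_comm]
    -- now : ∑ y, ∑ x, ∑ z, ∑ z', ... ; push x inside
    calc ∑ y, ∑ x, ∑ z, ∑ z', (B y z * C z x) * (B y z' * C z' x)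
        = ∑ y, ∑ z, ∑ x, ∑ z', (B y z * C z x) * (B y z' * C z' x) := by
          exact Finset.sum_congr rfl fun y _ => Finset.sum_comm
      _ = ∑ y, ∑ z, ∑ z', ∑ x, (B y z * C z x) * (B y z' * C z' x) := by
          exact Finset.sum_congr rfl fun y _ => Finset.sum_congr rfl fun z _ =>
            Finset.sum_comm
      _ = ∑ z, ∑ y, ∑ z', ∑ x, (B y z * C z x) * (B y z' * C z' x) := Finset.sum_comm
      _ = ∑ z, ∑ z', ∑ y, ∑ x, (B y z * C z x) * (B y z' * C z' x) := by
          exact Finset.sum_congr rfl fun z _ => Finset.sum_comm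
      _ = ∑ z, ∑ z', P z z' * R z z' := by
          refine Finset.sum_congr rfl fun z _ => Finset.sum_congr rfl fun z' _ => ?_
          rw [hP, hR, Finset.sum_mul_sum]
          refine Finset.sum_congr rfl fun y _ => Finset.sum_congr rfl fun x _ => ?_
          ring
  have hPsq : ∀ z z', P z z' ^ 2 ≤ d z * d z' := by
    intro z z'
    calc P z z' ^ 2 ≤ (∑ y, B y z ^ 2) * ∑ y, B y z' ^ 2 :=
          Finset.sum_mul_sq_le_sq_mul_sq _ _ _
      _ = d z * d z' := by
          rw [hd]
          congr 1 <;> exact Finset.sum_congr rfl fun y _ => hBsq _ _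
  have hRsq : ∀ z z', R z z' ^ 2 ≤ e z * e z' := by
    intro z z'
    calc R z z' ^ 2 ≤ (∑ x, C z x ^ 2) * ∑ x, C z' x ^ 2 :=
          Finset.sum_mul_sq_le_sq_mul_sq _ _ _
      _ = e z * e z' := by
          rw [he]
          congr 1 <;> exact Finset.sum_congr rfl fun x _ => hCsq _ _
  have hQnn : 0 ≤ Q := by
    rw [hQ]
    exact Finset.sum_nonneg fun x _ => Finset.sum_nonneg fun y _ => sq_nonneg _
  -- Step 3 : Q ≤ |S₂| * |S₃|
  have step3 : Q ≤ (S₂.card : ℝ) * S₃.card := by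
    have hc2 : (0:ℝ) ≤ S₂.card := Nat.cast_nonneg _
    have hc3 : (0:ℝ) ≤ S₃.card := Nat.cast_nonneg _
    have cs := Finset.sum_mul_sq_le_sq_mul_sq Finset.univ
      (fun q : Fin n × Fin n => P q.1 q.2) (fun q : Fin n × Fin n => R q.1 q.2)
    rw [pairsum (fun a b => P a b * R a b), pairsum (fun a b => P a b ^ 2),
      pairsum (fun a b => R a b ^ 2)] at cs
    have h2 : ∑ z, ∑ z', P z z' ^ 2 ≤ (S₂.card : ℝ) ^ 2 := by
      calc ∑ z, ∑ z', P z z' ^ 2 ≤ ∑ z, ∑ z', d z * d z' :=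
            Finset.sum_le_sum fun z _ => Finset.sum_le_sum fun z' _ => hPsq z z'
        _ = (∑ z, d z) ^ 2 := by rw [sq, Finset.sum_mul_sum]
        _ = (S₂.card : ℝ) ^ 2 := by rw [hdsum]
    have h3 : ∑ z, ∑ z', R z z' ^ 2 ≤ (S₃.card : ℝ) ^ 2 := by
      calc ∑ z, ∑ z', R z z' ^ 2 ≤ ∑ z, ∑ z', e z * e z' :=
            Finset.sum_le_sum fun z _ => Finset.sum_le_sum fun z' _ => hRsq z z'
        _ = (∑ z, e z) ^ 2 := by rw [sq, Finset.sum_mul_sum]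
        _ = (S₃.card : ℝ) ^ 2 := by rw [hesum]
    have hRnn : 0 ≤ ∑ z, ∑ z', R z z' ^ 2 :=
      Finset.sum_nonneg fun z _ => Finset.sum_nonneg fun z' _ => sq_nonneg _
    have hQ2 : Q ^ 2 ≤ ((S₂.card : ℝ) * S₃.card) ^ 2 := by
      calc Q ^ 2 ≤ (∑ z, ∑ z', P z z' ^ 2) * ∑ z, ∑ z', R z z' ^ 2 := by rw [step2]; exact cs
        _ ≤ (S₂.card : ℝ) ^ 2 * (S₃.card : ℝ) ^ 2 := mul_le_mul h2 h3 hRnn (by positivity)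
        _ = ((S₂.card : ℝ) * S₃.card) ^ 2 := by ring
    calc Q = Real.sqrt (Q ^ 2) := (Real.sqrt_sq hQnn).symm
      _ ≤ Real.sqrt (((S₂.card : ℝ) * S₃.card) ^ 2) := Real.sqrt_le_sqrt hQ2
      _ = (S₂.card : ℝ) * S₃.card := Real.sqrt_sq (mul_nonneg hc2 hc3)
  have final : T ^ 2 ≤ (S₁.card : ℝ) * S₂.card * S₃.card := by
    have hc1 : (0:ℝ) ≤ S₁.card := Nat.cast_nonneg _
    calc T ^ 2 ≤ (S₁.card : ℝ) * Q := step1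
      _ ≤ (S₁.card : ℝ) * ((S₂.card : ℝ) * S₃.card) := mul_le_mul_of_nonneg_left step3 hc1
      _ = (S₁.card : ℝ) * S₂.card * S₃.card := by ring
  exact Real.le_sqrt_of_sq_le final
end

section
/- Suppose n weighted balls with weights w₁,...,w_n are thrown independently and uniformly at random into p bins, where Σᵢ wᵢ ≤ m and each wᵢ ≤ B = a·m/p with a ≥ 1/ln(1/δ) for some 0 < δ < 1. Then the probability that some bin receives total weight exceeding 3·ln(1/δ)·a·m/p is at most p·δ. -/
/-- Weighted balls into bins: `n` balls with weights `w i`, thrown uniformly and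
independently into `p` bins (a random function `f : Fin n → Fin p`).  If the total
weight is at most `m` and each weight is at most `B = a·m/p` with `a ≥ 1/ln(1/δ)`,
then the probability some bin gets weight more than `3·ln(1/δ)·a·m/p` is at most `p·δ`. -/
theorem stmt_14 (n p : ℕ) (hp : 0 < p) (w : Fin n → ℝ) (m a δ : ℝ)
    (hw : ∀ i, 0 ≤ w i) (hwsum : ∑ i, w i ≤ m)
    (hδ0 : 0 < δ) (hδ1 : δ < 1)
    (ha : 1 / Real.log (1 / δ) ≤ a)
    (hwB : ∀ i, w i ≤ a * m / p) :
    ((Finset.univ.filter (fun f : Fin n → Fin p =>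
        ∃ b : Fin p, 3 * Real.log (1 / δ) * a * m / p <
          ∑ i ∈ Finset.univ.filter (fun i => f i = b), w i)).card : ℝ) /
      ((p : ℝ) ^ n) ≤ p * δ := by
  classical
  set L := Real.log (1 / δ) with hLdef
  have hL : 0 < L := Real.log_pos (by rw [lt_div_iff₀ hδ0]; linarith)
  have ha0 : 0 < a := lt_of_lt_of_le (by positivity) ha
  have hppos : (0:ℝ) < p := by exact_mod_cast hp
  have hm0 : 0 ≤ m := le_trans (Finset.sum_nonneg fun i _ => hw i) hwsum
  set T := 3 * L * a * m / (p:ℝ) with hTdef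
  set B := a * m / (p:ℝ) with hBdef
  have hB0 : 0 ≤ B := by positivity
  have hpn : (0:ℝ) < (p:ℝ) ^ n := by positivity
  have hexpδ : Real.exp (-L) = δ := by
    rw [hLdef, one_div, Real.log_inv, neg_neg, Real.exp_log hδ0]
  rcases eq_or_lt_of_le hB0 with hB | hBpos
  · -- degenerate case: B = 0, all weights zero, event empty
    have hw0 : ∀ i, w i = 0 := fun i => le_antisymm (hB ▸ hwB i) (hw i)
    have hT0 : T = 0 := by
      have h3 : T = 3 * L * B := by rw [hTdef, hBdef]; ring
      rw [h3, ← hB, mul_zero]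
    have hempty : (Finset.univ.filter (fun f : Fin n → Fin p =>
        ∃ b : Fin p, T < ∑ i ∈ Finset.univ.filter (fun i => f i = b), w i)) = ∅ := by
      apply Finset.filter_eq_empty_iff.2
      intro f _
      push_neg
      intro b
      rw [hT0, Finset.sum_eq_zero fun i _ => hw0 i]
    rw [hempty]
    simp only [Finset.card_empty, Nat.cast_zero, zero_div]
    positivity
  · -- main case
    have hmpos : 0 < m := by
      by_contra h
      push_neg at h
      have hBle : B ≤ 0 := by
        rw [hBdef]
        apply div_nonpos_of_nonpos_of_nonneg _ (le_of_lt hppos)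
        nlinarith
      linarith
    set t := 1 / B with htdef
    have ht : 0 < t := by positivity
    have htT : t * T = 3 * L := by
      rw [htdef, hTdef, hBdef]
      field_simp
    -- exponential moment identity
    have key : ∀ b : Fin p,
        (∑ f : Fin n → Fin p,
            Real.exp (t * ∑ i ∈ Finset.univ.filter (fun i => f i = b), w i))
          = ∏ i, ((p:ℝ) - 1 + Real.exp (t * w i)) := by
      intro b
      have h1 : ∀ f : Fin n → Fin p,
          Real.exp (t * ∑ i ∈ Finset.univ.filter (fun i => f i = b), w i)
            = ∏ i, (if f i = b then Real.exp (t * w i) else 1) := by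
        intro f
        rw [Finset.sum_filter, Finset.mul_sum, Real.exp_sum]
        refine Finset.prod_congr rfl fun i _ => ?_
        split_ifs <;> simp
      simp_rw [h1]
      rw [← Fintype.prod_sum (fun i (v : Fin p) => if v = b then Real.exp (t * w i) else 1)]
      refine Finset.prod_congr rfl fun i _ => ?_
      rw [Finset.sum_eq_sum_sdiff_singleton_add (Finset.mem_univ b)]
      have h2 : (∑ v ∈ Finset.univ \ {b}, (if v = b then Real.exp (t * w i) else 1))
          = ∑ v ∈ Finset.univ \ {b}, (1:ℝ) :=
        Finset.sum_congr rfl fun v hv => if_neg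
          (by simp only [Finset.mem_sdiff, Finset.mem_singleton] at hv; exact hv.2)
      rw [h2, Finset.sum_const, Finset.card_sdiff_of_subset (by simp), Finset.card_univ, if_pos rfl]
      simp only [Fintype.card_fin, Finset.card_singleton, nsmul_eq_mul, mul_one]
      rw [Nat.cast_sub hp]
      push_cast; ring
    -- Chernoff bound per bin
    have chern : ∀ b : Fin p,
        ((Finset.univ.filter (fun f : Fin n → Fin p =>
            T < ∑ i ∈ Finset.univ.filter (fun i => f i = b), w i)).card : ℝ)
          ≤ Real.exp (-(3 * L)) * ∏ i, ((p:ℝ) - 1 + Real.exp (t * w i)) := by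
      intro b
      rw [← key b, Finset.mul_sum]
      have hcard : ((Finset.univ.filter (fun f : Fin n → Fin p =>
            T < ∑ i ∈ Finset.univ.filter (fun i => f i = b), w i)).card : ℝ)
          = ∑ f ∈ Finset.univ.filter (fun f : Fin n → Fin p =>
            T < ∑ i ∈ Finset.univ.filter (fun i => f i = b), w i), (1:ℝ) := by
        rw [Finset.sum_const, nsmul_eq_mul, mul_one]
      rw [hcard]
      refine le_trans (Finset.sum_le_sum ?_)
        (Finset.sum_le_sum_of_subset_of_nonneg (Finset.filter_subset _ _)
          fun f _ _ => by positivity)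
      intro f hf
      rw [Finset.mem_filter] at hf
      rw [← Real.exp_add]
      refine Real.one_le_exp ?_
      nlinarith [mul_lt_mul_of_pos_left hf.2 ht]
    -- union bound
    have union : ((Finset.univ.filter (fun f : Fin n → Fin p =>
          ∃ b : Fin p, T < ∑ i ∈ Finset.univ.filter (fun i => f i = b), w i)).card : ℝ)
        ≤ ∑ b : Fin p, ((Finset.univ.filter (fun f : Fin n → Fin p =>
            T < ∑ i ∈ Finset.univ.filter (fun i => f i = b), w i)).card : ℝ) := by
      have hsub : (Finset.univ.filter (fun f : Fin n → Fin p =>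
          ∃ b : Fin p, T < ∑ i ∈ Finset.univ.filter (fun i => f i = b), w i))
          ⊆ Finset.univ.biUnion (fun b : Fin p => Finset.univ.filter (fun f : Fin n → Fin p =>
            T < ∑ i ∈ Finset.univ.filter (fun i => f i = b), w i)) := by
        intro f hf
        simp only [Finset.mem_filter, Finset.mem_univ, true_and] at hf
        obtain ⟨b, hb⟩ := hf
        exact Finset.mem_biUnion.2 ⟨b, Finset.mem_univ b,
          Finset.mem_filter.2 ⟨Finset.mem_univ f, hb⟩⟩
      exact_mod_cast le_trans (Finset.card_le_card hsub) Finset.card_biUnion_le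
    -- bound on each factor of the product
    have he1 : (1:ℝ) ≤ Real.exp 1 := by linarith [Real.add_one_le_exp (1:ℝ)]
    have prodbd : (∏ i, ((p:ℝ) - 1 + Real.exp (t * w i)))
        ≤ (p:ℝ) ^ n * Real.exp ((Real.exp 1 - 1) * L) := by
      have step : ∀ i, (p:ℝ) - 1 + Real.exp (t * w i)
          ≤ (p:ℝ) * Real.exp ((Real.exp 1 - 1) * (t * w i) / p) := by
        intro i
        have hx0 : 0 ≤ t * w i := mul_nonneg ht.le (hw i)
        have hx1 : t * w i ≤ 1 := by
          rw [htdef, div_mul_eq_mul_div, one_mul, div_le_one hBpos]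
          exact hwB i
        have hconv : Real.exp (t * w i) ≤ 1 + (Real.exp 1 - 1) * (t * w i) := by
          have h := convexOn_exp.2 (Set.mem_univ (0:ℝ)) (Set.mem_univ (1:ℝ))
            (by linarith : (0:ℝ) ≤ 1 - t * w i) hx0 (by ring)
          simp only [smul_eq_mul, mul_zero, mul_one, zero_add, Real.exp_zero] at h
          linarith
        have h2 : 1 + (Real.exp 1 - 1) * (t * w i) / p
            ≤ Real.exp ((Real.exp 1 - 1) * (t * w i) / p) := by
          linarith [Real.add_one_le_exp ((Real.exp 1 - 1) * (t * w i) / p)]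
        have h3 : (p:ℝ) - 1 + Real.exp (t * w i)
            ≤ (p:ℝ) * (1 + (Real.exp 1 - 1) * (t * w i) / p) := by
          rw [mul_add, mul_one, mul_div_cancel₀ _ (ne_of_gt hppos)]
          linarith
        exact le_trans h3 (mul_le_mul_of_nonneg_left h2 hppos.le)
      calc (∏ i, ((p:ℝ) - 1 + Real.exp (t * w i)))
          ≤ ∏ i, ((p:ℝ) * Real.exp ((Real.exp 1 - 1) * (t * w i) / p)) :=
            Finset.prod_le_prod (fun i _ => by
              have e1 := Real.exp_pos (t * w i)
              have e2 : (1:ℝ) ≤ p := by exact_mod_cast hp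
              linarith) (fun i _ => step i)
        _ = (p:ℝ) ^ n * Real.exp (∑ i, (Real.exp 1 - 1) * (t * w i) / p) := by
            rw [Finset.prod_mul_distrib, Finset.prod_const, Finset.card_univ,
              Fintype.card_fin, ← Real.exp_sum]
        _ ≤ (p:ℝ) ^ n * Real.exp ((Real.exp 1 - 1) * L) := by
            apply mul_le_mul_of_nonneg_left _ hpn.le
            apply Real.exp_le_exp.2
            have hsum : (∑ i, (Real.exp 1 - 1) * (t * w i) / p)
                = (Real.exp 1 - 1) * t / p * ∑ i, w i := by
              rw [Finset.mul_sum]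
              exact Finset.sum_congr rfl fun i _ => by ring
            have hc0 : 0 ≤ (Real.exp 1 - 1) * t / p :=
              div_nonneg (mul_nonneg (by linarith) ht.le) hppos.le
            have h4 : (Real.exp 1 - 1) * t / p * ∑ i, w i
                ≤ (Real.exp 1 - 1) * t / p * m := mul_le_mul_of_nonneg_left hwsum hc0
            have h5 : (Real.exp 1 - 1) * t / p * m = (Real.exp 1 - 1) * (1 / a) := by
              rw [htdef, hBdef]
              field_simp
            have hainv : 1 / a ≤ L := by
              rw [div_le_iff₀ ha0]
              rw [div_le_iff₀ hL] at ha
              nlinarith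
            have h6 : (Real.exp 1 - 1) * (1 / a) ≤ (Real.exp 1 - 1) * L :=
              mul_le_mul_of_nonneg_left hainv (by linarith)
            rw [hsum]
            linarith
    -- final arithmetic
    have he3 : Real.exp 1 < 3 := lt_trans Real.exp_one_lt_d9 (by norm_num)
    rw [div_le_iff₀ hpn]
    calc ((Finset.univ.filter (fun f : Fin n → Fin p =>
          ∃ b : Fin p, T < ∑ i ∈ Finset.univ.filter (fun i => f i = b), w i)).card : ℝ)
        ≤ ∑ b : Fin p, ((Finset.univ.filter (fun f : Fin n → Fin p =>
            T < ∑ i ∈ Finset.univ.filter (fun i => f i = b), w i)).card : ℝ) := union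
      _ ≤ ∑ _b : Fin p, Real.exp (-(3 * L)) * ∏ i, ((p:ℝ) - 1 + Real.exp (t * w i)) :=
          Finset.sum_le_sum fun b _ => chern b
      _ = (p:ℝ) * (Real.exp (-(3 * L)) * ∏ i, ((p:ℝ) - 1 + Real.exp (t * w i))) := by
          rw [Finset.sum_const, Finset.card_univ, Fintype.card_fin, nsmul_eq_mul]
      _ ≤ (p:ℝ) * (Real.exp (-(3 * L)) * ((p:ℝ) ^ n * Real.exp ((Real.exp 1 - 1) * L))) := by
          apply mul_le_mul_of_nonneg_left _ hppos.le
          exact mul_le_mul_of_nonneg_left prodbd (Real.exp_pos _).le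
      _ = (p:ℝ) ^ n * ((p:ℝ) * Real.exp (-(3 * L) + (Real.exp 1 - 1) * L)) := by
          rw [Real.exp_add]; ring
      _ ≤ (p:ℝ) ^ n * ((p:ℝ) * Real.exp (-L)) := by
          apply mul_le_mul_of_nonneg_left _ hpn.le
          apply mul_le_mul_of_nonneg_left _ hppos.le
          apply Real.exp_le_exp.2
          nlinarith
      _ = (p:ℝ) * δ * (p:ℝ) ^ n := by rw [hexpδ]; ring
end
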